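/- Let M be an indecomposable KG-module with vertex Q, and let H ≤ G be a subgroup containing no G-conjugate of Q. Then the Auslander–Reiten sequence 0 → Ω²(M) → N → M → 0 terminating in M splits upon restriction to H. -/

import Mathlib

open CategoryTheory MonoidalCategory Limits

noncomputable section

namespace AlgMod

variable (k G : Type) [Field k] [Group G]

instance : HasBinaryBiproducts (FDRep k G) := HasBinaryBiproducts.of_hasBinaryProducts
instance : HasFiniteBiproducts (FDRep k G) := HasFiniteBiproducts.of_hasFiniteProducts

variable {k G}

/-- `X` is a direct summand of `Y`. -/
def IsSummand (X Y : FDRep k G) : Prop :=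
  ∃ Z : FDRep k G, Nonempty (Y ≅ X ⊞ Z)

/-- An indecomposable module: nonzero, and in any biproduct decomposition one factor is zero. -/
def Indec (M : FDRep k G) : Prop :=
  ¬ IsZero M ∧ ∀ X Z : FDRep k G, Nonempty (M ≅ X ⊞ Z) → IsZero X ∨ IsZero Z

/-- `tpow M n` is the `n`-th tensor power `M^{⊗n}` of `M`. -/
def tpow (M : FDRep k G) : ℕ → FDRep k G
  | 0 => 𝟙_ (FDRep k G)
  | n + 1 => tpow M n ⊗ M

/-- A module is algebraic iff only finitely many isomorphism classes of indecomposable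
modules occur as direct summands of its tensor powers. -/
def Algebraic (M : FDRep k G) : Prop :=
  ∃ L : List (FDRep k G), ∀ N : FDRep k G, Indec N →
    (∃ n : ℕ, 1 ≤ n ∧ IsSummand N (tpow M n)) → ∃ N' ∈ L, Nonempty (N ≅ N')

/-- A module with no nonzero projective direct summands. -/
def ProjFree (M : FDRep k G) : Prop :=
  ∀ Q : FDRep k G, Projective Q → IsSummand Q M → IsZero Q

/-- `N` is the projective-free part `Ω⁰(M)` of `M`. -/
def IsProjFreePart (N M : FDRep k G) : Prop :=
  ProjFree N ∧ ∃ Q : FDRep k G, Projective Q ∧ Nonempty (M ≅ N ⊞ Q)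

/-- A short exact sequence `0 → A → B → C → 0` of representations. -/
def SES {A B C : FDRep k G} (f : A ⟶ B) (g : B ⟶ C) : Prop :=
  Function.Injective f.hom ∧ Function.Surjective g.hom ∧
    ∀ b : B.V, g.hom b = 0 ↔ ∃ a : A.V, f.hom a = b

/-- Heller operator data: `Ω i M` is the `i`-th Heller translate of `M` (projective-free by
convention, so that `Ω 0 M = Ω⁰(M)` is the projective-free part of `M`), and `P i M` is the
projective cover of `Ω i M`, so `0 → Ω (i+1) M → P i M → Ω i M → 0` is exact.  Minimality of
the covers is encoded by the kernels being projective-free. -/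
structure Heller (k G : Type) [Field k] [Group G] where
  Ω : ℤ → FDRep k G → FDRep k G
  P : ℤ → FDRep k G → FDRep k G
  P_projective : ∀ (i : ℤ) (M : FDRep k G), Projective (P i M)
  Ω_projFree : ∀ (i : ℤ) (M : FDRep k G), ProjFree (Ω i M)
  Ω_zero : ∀ M : FDRep k G, IsProjFreePart (Ω 0 M) M
  ses : ∀ (i : ℤ) (M : FDRep k G), ∃ (f : Ω (i + 1) M ⟶ P i M) (g : P i M ⟶ Ω i M), SES f g

/-- A module is periodic if some positive Heller translate is isomorphic to it
(modulo projectives). -/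
def Periodic (h : Heller k G) (M : FDRep k G) : Prop :=
  ∃ n : ℕ, 1 ≤ n ∧ Nonempty (h.Ω n M ≅ h.Ω 0 M)

/-- The restriction of a representation to a subgroup. -/
def res (H : Subgroup G) (M : FDRep k G) : FDRep k ↥H :=
  (Action.res (FGModuleCat k) H.subtype).obj M

/-- Carrier of the module induced from a representation of the subgroup `H` of the finite
group `G` (realised as the coinduced module, which is isomorphic to the induced module
since `G` is finite). -/
def indV [Fintype G] (H : Subgroup G) (M : FDRep k ↥H) : Submodule k (G → M) where
  carrier := {f | ∀ (h : ↥H) (g : G), f (↑h * g) = M.ρ h (f g)}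
  add_mem' := by intro a b ha hb h g; simp [ha h g, hb h g]
  zero_mem' := by intro h g; simp
  smul_mem' := by intro c a ha h g; simp [ha h g]

/-- The `G`-action on the induced module: `(g • f) x = f (x * g)`. -/
def indρ [Fintype G] (H : Subgroup G) (M : FDRep k ↥H) :
    Representation k G (indV H M) where
  toFun g :=
    { toFun := fun f => ⟨fun x => f.1 (x * g), fun h x => by
        simpa [mul_assoc] using f.2 h (x * g)⟩
      map_add' := fun a b => by ext x; rfl
      map_smul' := fun c a => by ext x; rfl }
  map_one' := by ext f x; simp
  map_mul' := fun g₁ g₂ => by ext f x; simp [mul_assoc]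

/-- The module `M↑G` induced from the representation `M` of a subgroup `H ≤ G`. -/
def ind [Fintype G] (H : Subgroup G) (M : FDRep k ↥H) : FDRep k G :=
  FDRep.of (indρ H M)

/-- `M` is relatively `Q`-projective: it is a direct summand of a module induced from `Q`. -/
def RelProj [Fintype G] (M : FDRep k G) (Q : Subgroup G) : Prop :=
  ∃ S : FDRep k ↥Q, IsSummand M (ind Q S)

/-- `Q` is a vertex of `M`: a minimal subgroup relative to which `M` is projective. -/
def IsVertex [Fintype G] (M : FDRep k G) (Q : Subgroup G) : Prop :=
  RelProj M Q ∧ ∀ Q' : Subgroup G, Q' ≤ Q → RelProj M Q' → Q' = Q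

/-- `0 → A → E → M → 0` is an almost-split (Auslander–Reiten) sequence: a non-split short
exact sequence such that every map to `M` which is not a split epimorphism factors through
`E → M`. -/
def AlmostSplit {A E M : FDRep k G} (f : A ⟶ E) (g : E ⟶ M) : Prop :=
  SES f g ∧ (¬ ∃ s : M ⟶ E, s ≫ g = 𝟙 M) ∧
    ∀ (X : FDRep k G) (u : X ⟶ M), (¬ ∃ s : M ⟶ X, s ≫ u = 𝟙 M) → ∃ v : X ⟶ E, v ≫ g = u

/-!
Write `ε : ind_H^G (res_H M) → M` for the counit of induction. With induction realised as
coinduction, `ε` is the relative trace `Tr_H^G` of evaluation at `1`, and extension by zero is an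
`H`-linear section of it. If `ε` had a `G`-linear section, Higman's criterion would give an
`H`-endomorphism `φ` of `M` with `Tr_H^G φ = 1`, while relative `Q`-projectivity gives a
`Q`-endomorphism `ψ` with `Tr_Q^G ψ = 1`. Grouping `Tr_H^G φ · Tr_Q^G ψ = 1` along the `G`-orbits
on `G/H × G/Q` (Mackey's formula) writes `1` as a sum of relative traces from the subgroups
`cHc⁻¹ ∩ Q`. By Fitting's lemma `End_G(M)` is local, so one summand is invertible and `M` is
relatively `cHc⁻¹ ∩ Q`-projective; minimality of the vertex forces `Q ≤ cHc⁻¹`, which is excluded.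

Hence `ε` is not a split epimorphism, so it factors through the almost-split map `E → M`, and
precomposing with extension by zero splits `E → M` over `H`.
-/

section Morphisms

variable {A B C : FDRep k G}

def homLin (f : A ⟶ B) : A →ₗ[k] B := f.hom.hom.hom

lemma homLin_comp (f : A ⟶ B) (g : B ⟶ C) : homLin (f ≫ g) = homLin g ∘ₗ homLin f := rfl

lemma homLin_ρ_apply (f : A ⟶ B) (g : G) (x : A) : homLin f (A.ρ g x) = B.ρ g (homLin f x) :=
  LinearMap.congr_fun (congrArg (fun u : A.V ⟶ B.V => u.hom.hom) (f.comm g)) x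

lemma hom_ext {f f' : A ⟶ B} (h : homLin f = homLin f') : f = f' :=
  Action.Hom.ext (FGModuleCat.hom_ext h)

def IsEquivariant (H : Subgroup G) (f : A →ₗ[k] B) : Prop :=
  ∀ h ∈ H, f ∘ₗ A.ρ h = B.ρ h ∘ₗ f

lemma isEquivariant_homLin (H : Subgroup G) (f : A ⟶ B) : IsEquivariant H (homLin f) :=
  fun h _ => LinearMap.ext (homLin_ρ_apply f h)

def mkHom (f : A →ₗ[k] B) (hf : IsEquivariant ⊤ f) : A ⟶ B :=
  Action.Hom.mk (ObjectProperty.homMk (ModuleCat.ofHom f)) fun g =>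
    FGModuleCat.hom_ext (hf g (Subgroup.mem_top g))

lemma nontrivial_of_not_isZero (hA : ¬ IsZero A) : Nontrivial A := by
  by_contra h
  rw [not_nontrivial_iff_subsingleton] at h
  exact hA ((IsZero.iff_id_eq_zero _).2 (hom_ext (LinearMap.ext fun _ => Subsingleton.elim _ _)))

end Morphisms

def isoBiprodCokernelOfRetraction {X Y : FDRep k G} (i : X ⟶ Y) (r : Y ⟶ X)
    (hir : i ≫ r = 𝟙 X) : Y ≅ X ⊞ cokernel i :=
  (ShortComplex.Splitting.ofExactOfRetraction (ShortComplex.cokernelSequence i)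
    (ShortComplex.cokernelSequence_exact i) r hir inferInstance).isoBinaryBiproduct

lemma isSummand_of_retraction {X Y : FDRep k G} (i : X ⟶ Y) (r : Y ⟶ X) (hir : i ≫ r = 𝟙 X) :
    IsSummand X Y :=
  ⟨_, ⟨isoBiprodCokernelOfRetraction i r hir⟩⟩

lemma Indec.isZero_or_epi_of_retraction {M X : FDRep k G} (hM : Indec M) (i : X ⟶ M)
    (r : M ⟶ X) (hir : i ≫ r = 𝟙 X) : IsZero X ∨ Epi i :=
  (hM.2 _ _ ⟨isoBiprodCokernelOfRetraction i r hir⟩).imp id fun hZ =>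
    Preadditive.epi_of_cokernel_zero (hZ.eq_of_tgt _ _)

lemma Indec.eq_zero_or_eq_id_of_idem {M : FDRep k G} (hM : Indec M) {e : M ⟶ M}
    (he : e ≫ e = e) : e = 0 ∨ e = 𝟙 M := by
  let i := kernel.ι (𝟙 M - e)
  let r : M ⟶ kernel (𝟙 M - e) := kernel.lift _ e (by simp [he])
  have hri : r ≫ i = e := kernel.lift_ι _ _ _
  have hi : i ≫ e = i := by
    have := kernel.condition (𝟙 M - e)
    rwa [Preadditive.comp_sub, Category.comp_id, sub_eq_zero, eq_comm] at this
  have hir : i ≫ r = 𝟙 _ := by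
    rw [← cancel_mono i, Category.assoc, hri, hi, Category.id_comp]
  rcases hM.isZero_or_epi_of_retraction i r hir with hK | hi_epi
  · exact Or.inl (by rw [← hri, hK.eq_of_tgt r 0, zero_comp])
  · right
    rw [← cancel_epi i, hi, Category.comp_id]

section EquivariantMaps

open Representation

variable {A B C : FDRep k G}

lemma IsEquivariant.comp {H : Subgroup G} {g : B →ₗ[k] C} {f : A →ₗ[k] B}
    (hg : IsEquivariant H g) (hf : IsEquivariant H f) : IsEquivariant H (g ∘ₗ f) := fun h hh => by
  rw [LinearMap.comp_assoc, hf h hh, ← LinearMap.comp_assoc, hg h hh, LinearMap.comp_assoc]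

lemma IsEquivariant.mono {H K : Subgroup G} {f : A →ₗ[k] B} (hf : IsEquivariant K f)
    (hHK : H ≤ K) : IsEquivariant H f :=
  fun h hh => hf h (hHK hh)

lemma ρ_comp_ρ_inv (g : G) : A.ρ g ∘ₗ A.ρ g⁻¹ = LinearMap.id :=
  LinearMap.ext (Representation.self_inv_apply A.ρ g)

lemma ρ_inv_comp_ρ (g : G) : A.ρ g⁻¹ ∘ₗ A.ρ g = LinearMap.id :=
  LinearMap.ext (Representation.inv_self_apply A.ρ g)

lemma isEquivariant_iff_linHom {H : Subgroup G} {f : A →ₗ[k] B} :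
    IsEquivariant H f ↔ ∀ h ∈ H, linHom A.ρ B.ρ h f = f := by
  refine forall₂_congr fun h _ => ⟨fun hc => ?_, fun hc => ?_⟩
  · rw [linHom_apply, ← LinearMap.comp_assoc, ← hc, LinearMap.comp_assoc, ρ_comp_ρ_inv,
      LinearMap.comp_id]
  · calc f ∘ₗ A.ρ h = linHom A.ρ B.ρ h f ∘ₗ A.ρ h := by rw [hc]
      _ = B.ρ h ∘ₗ f := by
        rw [linHom_apply, LinearMap.comp_assoc, LinearMap.comp_assoc, ρ_inv_comp_ρ,
          LinearMap.comp_id]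

lemma linHom_comp (g : G) (f : B →ₗ[k] C) (s : A →ₗ[k] B) :
    linHom A.ρ C.ρ g (f ∘ₗ s) = linHom B.ρ C.ρ g f ∘ₗ linHom A.ρ B.ρ g s := by
  simp only [linHom_apply, LinearMap.comp_assoc]
  rw [← LinearMap.comp_assoc _ (B.ρ g) (B.ρ g⁻¹), ρ_inv_comp_ρ, LinearMap.id_comp]

lemma linHom_out_mk {H : Subgroup G} {f : A →ₗ[k] B} (hf : IsEquivariant H f) (g : G) :
    linHom A.ρ B.ρ (QuotientGroup.mk g : G ⧸ H).out f = linHom A.ρ B.ρ g f := by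
  obtain ⟨h, hh⟩ := QuotientGroup.mk_out_eq_mul H g
  rw [hh, map_mul, Module.End.mul_apply, isEquivariant_iff_linHom.1 hf h h.2]

lemma linHom_out_smul {H : Subgroup G} {f : A →ₗ[k] B} (hf : IsEquivariant H f)
    (g : G) (q : G ⧸ H) :
    linHom A.ρ B.ρ (g • q).out f = linHom A.ρ B.ρ g (linHom A.ρ B.ρ q.out f) := by
  have hq : g • q = QuotientGroup.mk (g * q.out) := by
    conv_lhs => rw [← QuotientGroup.out_eq' q]
    rfl
  rw [hq, linHom_out_mk hf, map_mul, Module.End.mul_apply]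

lemma mul_out_mem_iff (H : Subgroup G) (y : G) (q : G ⧸ H) :
    y * q.out ∈ H ↔ q = QuotientGroup.mk y⁻¹ := by
  conv_rhs => rw [← QuotientGroup.out_eq' q]
  rw [QuotientGroup.eq, ← inv_mem_iff, mul_inv_rev]

lemma out_inv_smul {H : Subgroup G} (q : G ⧸ H) : q.out⁻¹ • q = QuotientGroup.mk 1 := by
  conv_lhs => arg 2; rw [← QuotientGroup.out_eq' q]
  rw [MulAction.Quotient.smul_mk, smul_eq_mul, inv_mul_cancel]

lemma map_conj_inv_le_of_le_stabilizer {H Q : Subgroup G} {c : G}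
    (hQ : Q ≤ MulAction.stabilizer G (QuotientGroup.mk c : G ⧸ H)) :
    Q.map (MulAut.conj c⁻¹).toMonoidHom ≤ H := by
  rintro _ ⟨q, hq, rfl⟩
  have hqc := MulAction.mem_stabilizer_iff.1 (hQ hq)
  rw [MulAction.Quotient.smul_mk, QuotientGroup.eq] at hqc
  simpa [MulAut.conj, mul_assoc] using H.inv_mem hqc

lemma isEquivariant_stabilizer {X : Type*} [MulAction G X] {F : X → A →ₗ[k] B}
    (hF : ∀ (g : G) (x : X), F (g • x) = linHom A.ρ B.ρ g (F x)) (x : X) :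
    IsEquivariant (MulAction.stabilizer G x) (F x) :=
  isEquivariant_iff_linHom.2 fun g hg => by rw [← hF, MulAction.mem_stabilizer_iff.1 hg]

variable (A) in
def equivariantEnd (H : Subgroup G) : Subalgebra k (Module.End k A) :=
  Subalgebra.centralizer k (A.ρ '' H)

lemma mem_equivariantEnd_iff {H : Subgroup G} {φ : Module.End k A} :
    φ ∈ equivariantEnd A H ↔ IsEquivariant H φ := by
  simp only [equivariantEnd, Subalgebra.mem_centralizer_iff, Set.forall_mem_image]
  exact forall₂_congr fun _ _ => eq_comm

lemma isUnit_of_isUnit_val {H : Subgroup G} {a : equivariantEnd A H}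
    (ha : IsUnit (a : Module.End k A)) : IsUnit a := by
  obtain ⟨u, hu⟩ := ha
  have hinv : (↑u⁻¹ : Module.End k A) ∈ equivariantEnd A H :=
    (Subalgebra.mem_centralizer_iff k).2 fun x hx =>
      (Commute.units_inv_right (hu ▸ (Subalgebra.mem_centralizer_iff k).1 a.2 x hx :)).eq
  exact ⟨⟨a, ⟨_, hinv⟩, Subtype.ext (by simp [← hu]), Subtype.ext (by simp [← hu])⟩, rfl⟩

end EquivariantMaps

section Fitting

variable {M : FDRep k G}

lemma Indec.eq_zero_or_eq_one_of_isIdempotentElem (hM : Indec M) {e : Module.End k M}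
    (he : e ∈ equivariantEnd M ⊤) (hidem : IsIdempotentElem e) : e = 0 ∨ e = 1 :=
  (hM.eq_zero_or_eq_id_of_idem (e := mkHom e (mem_equivariantEnd_iff.1 he)) (hom_ext hidem)).imp
    (congrArg homLin) (congrArg homLin)

lemma Indec.isNilpotent_or_isUnit (hM : Indec M) (a : equivariantEnd M ⊤) :
    IsNilpotent a ∨ IsUnit a := by
  obtain ⟨n, hcompl, hn⟩ := ((LinearMap.eventually_isCompl_ker_pow_range_pow
    (a : Module.End k M)).and (Filter.eventually_ge_atTop 1)).exists
  have hb : ((a ^ n : equivariantEnd M ⊤) : Module.End k M) = (a : Module.End k M) ^ n := rfl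
  set b := (a : Module.End k M) ^ n
  have hcomm : ∀ g x, b (M.ρ g x) = M.ρ g (b x) :=
    fun g => LinearMap.congr_fun (mem_equivariantEnd_iff.1 (a ^ n).2 g (Subgroup.mem_top g))
  let e := (LinearMap.ker b).projection (LinearMap.range b) hcompl
  have hidem : IsIdempotentElem e := Submodule.isIdempotentElem_projection hcompl
  have he : e ∈ equivariantEnd M ⊤ := by
    refine mem_equivariantEnd_iff.2 fun g _ => ((LinearMap.IsIdempotentElem.commute_iff hidem).2
      ⟨?_, ?_⟩).eq
    · rw [Submodule.range_projection]
      intro x hx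
      simp only [Submodule.mem_comap, LinearMap.mem_ker] at hx ⊢
      rw [hcomm, hx, map_zero]
    · rw [Submodule.ker_projection]
      rintro _ ⟨x, rfl⟩
      exact ⟨M.ρ g x, hcomm g x⟩
  rcases hM.eq_zero_or_eq_one_of_isIdempotentElem he hidem with h0 | h1
  · right
    have hker : LinearMap.ker b = ⊥ := by
      rw [← Submodule.range_projection hcompl]
      exact (congrArg LinearMap.range h0).trans LinearMap.range_zero
    rw [← isUnit_pow_iff (n := n) (by omega)]
    apply isUnit_of_isUnit_val
    rw [hb, Module.End.isUnit_iff]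
    exact ⟨LinearMap.ker_eq_bot.1 hker,
      LinearMap.injective_iff_surjective.1 (LinearMap.ker_eq_bot.1 hker)⟩
  · left
    have hrange : LinearMap.range b = ⊥ := by
      rw [← Submodule.ker_projection hcompl]
      exact (congrArg LinearMap.ker h1).trans LinearMap.ker_id
    exact ⟨n, Subtype.ext (hb.trans (LinearMap.range_eq_bot.1 hrange))⟩

lemma Indec.isLocalRing (hM : Indec M) : IsLocalRing (equivariantEnd M ⊤) :=
  haveI := nontrivial_of_not_isZero hM.1
  IsLocalRing.of_isUnit_or_isUnit_one_sub_self fun a =>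
    (hM.isNilpotent_or_isUnit a).symm.imp_right IsNilpotent.isUnit_one_sub

end Fitting

section RelTrace

open Representation

variable [Fintype G] {A B C : FDRep k G}

instance (H : Subgroup G) : Fintype (G ⧸ H) := Fintype.ofFinite _

def relTrace (H : Subgroup G) (f : A →ₗ[k] B) : A →ₗ[k] B :=
  ∑ q : G ⧸ H, linHom A.ρ B.ρ q.out f

lemma relTrace_isEquivariant {H : Subgroup G} {f : A →ₗ[k] B} (hf : IsEquivariant H f) :
    IsEquivariant ⊤ (relTrace H f) := by
  refine isEquivariant_iff_linHom.2 fun g _ => ?_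
  rw [relTrace, map_sum]
  exact Fintype.sum_equiv (MulAction.toPerm g) _ _ fun q => (linHom_out_smul hf g q).symm

lemma relTrace_comp {H : Subgroup G} (f : B →ₗ[k] C) {s : A →ₗ[k] B} (hs : IsEquivariant ⊤ s) :
    relTrace H f ∘ₗ s = relTrace H (f ∘ₗ s) := by
  ext x
  simp only [relTrace, LinearMap.comp_apply, LinearMap.sum_apply, linHom_comp,
    isEquivariant_iff_linHom.1 hs _ (Subgroup.mem_top _)]

lemma comp_relTrace {H : Subgroup G} (f : A →ₗ[k] B) {s : B →ₗ[k] C} (hs : IsEquivariant ⊤ s) :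
    s ∘ₗ relTrace H f = relTrace H (s ∘ₗ f) := by
  ext x
  simp only [relTrace, LinearMap.comp_apply, LinearMap.sum_apply, map_sum, linHom_comp,
    isEquivariant_iff_linHom.1 hs _ (Subgroup.mem_top _)]

lemma relTrace_comp_relTrace {H K : Subgroup G} (f : B →ₗ[k] C) (s : A →ₗ[k] B) :
    relTrace H f ∘ₗ relTrace K s =
      ∑ x : (G ⧸ H) × (G ⧸ K), linHom B.ρ C.ρ x.1.out f ∘ₗ linHom A.ρ B.ρ x.2.out s := by
  ext a
  simp [relTrace, LinearMap.sum_apply, map_sum, Fintype.sum_prod_type]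

lemma sum_eq_sum_relTrace_stabilizer {X : Type*} [MulAction G X] [Fintype X]
    [Fintype (MulAction.orbitRel.Quotient G X)] {F : X → A →ₗ[k] B}
    (hF : ∀ (g : G) (x : X), F (g • x) = linHom A.ρ B.ρ g (F x))
    {rep : MulAction.orbitRel.Quotient G X → X} (hrep : Function.LeftInverse Quotient.mk'' rep) :
    ∑ x, F x = ∑ ω, relTrace (MulAction.stabilizer G (rep ω)) (F (rep ω)) := by
  rw [← Fintype.sum_equiv (MulAction.selfEquivSigmaOrbitsQuotientStabilizer' G X hrep).symm _ _
    fun _ => rfl, Fintype.sum_sigma]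
  refine Fintype.sum_congr _ _ fun ω => Fintype.sum_congr _ _ fun q => ?_
  rw [← hF]
  conv_lhs => rw [← QuotientGroup.out_eq' q]
  rfl

end RelTrace

section Induction

open Representation

variable [Fintype G] (H : Subgroup G)

def evalAt (S : FDRep k H) (x : G) : (ind H S : Type) →ₗ[k] (S : Type) :=
  (LinearMap.proj x).comp (indV H S).subtype

lemma ind_ext {S : FDRep k H} {f f' : (ind H S : Type)} (h : ∀ x, f.1 x = f'.1 x) : f = f' :=
  Subtype.ext (funext h)

open Classical in
def extendByZero (S : FDRep k H) : (S : Type) →ₗ[k] (ind H S : Type) where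
  toFun s := ⟨fun x => if hx : x ∈ H then S.ρ ⟨x, hx⟩ s else 0, fun h g => by
    dsimp only
    by_cases hg : g ∈ H
    · rw [dif_pos hg, dif_pos (H.mul_mem h.2 hg), ← Module.End.mul_apply, ← map_mul]
      rfl
    · have hhg : ↑h * g ∉ H := fun hc => hg (by simpa using H.mul_mem (H.inv_mem h.2) hc)
      rw [dif_neg hg, dif_neg hhg, map_zero]⟩
  map_add' a b := ind_ext H fun x => by
    change _ = (if hx : x ∈ H then S.ρ ⟨x, hx⟩ a else 0) + (if hx : x ∈ H then S.ρ ⟨x, hx⟩ b else 0)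
    by_cases hx : x ∈ H <;> simp [hx]
  map_smul' c a := ind_ext H fun x => by
    change _ = c • (if hx : x ∈ H then S.ρ ⟨x, hx⟩ a else 0)
    by_cases hx : x ∈ H <;> simp [hx]

variable {H}

lemma evalAt_one_ρ {S : FDRep k H} (h : H) (f : (ind H S : Type)) :
    evalAt H S 1 ((ind H S).ρ h f) = S.ρ h (evalAt H S 1 f) := by
  have := f.2 h 1
  rw [mul_one] at this
  exact (congrArg f.1 (one_mul (h : G))).trans this

open Classical in
lemma extendByZero_ρ {S : FDRep k H} (h : H) (s : (S : Type)) :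
    extendByZero H S (S.ρ h s) = (ind H S).ρ h (extendByZero H S s) := by
  refine ind_ext H fun x => ?_
  change (if hx : x ∈ H then S.ρ ⟨x, hx⟩ (S.ρ h s) else 0) =
    if hx : x * h ∈ H then S.ρ ⟨x * h, hx⟩ s else 0
  by_cases hx : x ∈ H
  · rw [dif_pos hx, dif_pos (H.mul_mem hx h.2), ← Module.End.mul_apply, ← map_mul]
    rfl
  · rw [dif_neg hx, dif_neg fun hc => hx (by simpa using H.mul_mem hc (H.inv_mem h.2))]

lemma evalAt_ρ {S : FDRep k H} (x g : G) (f : (ind H S : Type)) :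
    evalAt H S x ((ind H S).ρ g f) = evalAt H S (x * g) f := rfl

open Classical in
lemma evalAt_extendByZero {S : FDRep k H} (x : G) (s : (S : Type)) :
    evalAt H S x (extendByZero H S s) = if hx : x ∈ H then S.ρ ⟨x, hx⟩ s else 0 := rfl

variable (H) in
def evalOne (M : FDRep k G) : (ind H (res H M) : Type) →ₗ[k] (M : Type) := evalAt H (res H M) 1

lemma isEquivariant_evalOne (M : FDRep k G) : IsEquivariant H (evalOne H M) :=
  fun h hh => LinearMap.ext fun f => evalAt_one_ρ ⟨h, hh⟩ f

lemma isEquivariant_extendByZero_comp_evalAt_one (S : FDRep k H) :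
    IsEquivariant (A := ind H S) (B := ind H S) H (extendByZero H S ∘ₗ evalAt H S 1) :=
  fun h hh => LinearMap.ext fun f => by
    simp only [LinearMap.comp_apply, evalAt_one_ρ ⟨h, hh⟩, extendByZero_ρ]

variable (H) in
def counit (M : FDRep k G) : ind H (res H M) ⟶ M :=
  mkHom (relTrace H (evalOne H M)) (relTrace_isEquivariant (isEquivariant_evalOne M))

open Classical in
lemma relTrace_extendByZero_comp_evalAt_one (S : FDRep k H) :
    relTrace (A := ind H S) (B := ind H S) H (extendByZero H S ∘ₗ evalAt H S 1) = LinearMap.id := by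
  refine LinearMap.ext fun f => ind_ext H fun x => ?_
  change evalAt H S x (relTrace H _ f) = f.1 x
  have hterm : ∀ q : G ⧸ H, evalAt H S x (linHom (ind H S).ρ (ind H S).ρ q.out
      (extendByZero H S ∘ₗ evalAt H S 1) f) = if x * q.out ∈ H then f.1 x else 0 := by
    intro q
    rw [linHom_apply, LinearMap.comp_apply, evalAt_ρ, LinearMap.comp_apply, LinearMap.comp_apply,
      evalAt_extendByZero]
    split_ifs with h
    · change S.ρ ⟨x * q.out, h⟩ (f.1 (1 * q.out⁻¹)) = f.1 x
      rw [← f.2 ⟨_, h⟩]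
      group
    · rfl
  rw [relTrace, LinearMap.sum_apply, map_sum, Finset.sum_congr rfl fun q _ => hterm q]
  simp only [mul_out_mem_iff, Finset.sum_ite_eq', Finset.mem_univ, if_true]

lemma counit_apply (M : FDRep k G) (f : (ind H (res H M) : Type)) :
    homLin (counit H M) f = ∑ q : G ⧸ H, M.ρ q.out (f.1 q.out⁻¹) := by
  unfold counit homLin mkHom relTrace
  refine (LinearMap.sum_apply _ _ _).trans (Finset.sum_congr rfl fun q _ => ?_)
  change M.ρ q.out (f.1 (1 * q.out⁻¹)) = _
  rw [one_mul]

open Classical in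
lemma counit_extendByZero (M : FDRep k G) (m : (M : Type)) :
    homLin (counit H M) (extendByZero H (res H M) m) = m := by
  rw [counit_apply]
  have hterm : ∀ q : G ⧸ H, M.ρ q.out ((extendByZero H (res H M) m).1 q.out⁻¹) =
      if 1 * q.out ∈ H then m else 0 := by
    intro q
    change M.ρ q.out (if h : q.out⁻¹ ∈ H then M.ρ q.out⁻¹ m else 0) = _
    by_cases h : q.out ∈ H
    · rw [dif_pos (H.inv_mem h), if_pos (by simpa using h)]
      exact Representation.self_inv_apply M.ρ _ m
    · rw [dif_neg (by simpa using h), if_neg (by simpa using h), map_zero]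
  rw [Finset.sum_congr rfl fun q _ => hterm q]
  simp only [mul_out_mem_iff, Finset.sum_ite_eq', Finset.mem_univ, if_true]
end Induction

section Higman

variable [Fintype G] {H : Subgroup G}

def indLift {M : FDRep k G} {S : FDRep k H} (χ : (M : Type) →ₗ[k] (S : Type))
    (hχ : ∀ h : H, χ ∘ₗ M.ρ h = S.ρ h ∘ₗ χ) : (M : Type) →ₗ[k] (ind H S : Type) where
  toFun m := ⟨fun x => χ (M.ρ x m), fun h g => by
    change χ (M.ρ (↑h * g) m) = S.ρ h (χ (M.ρ g m))
    rw [map_mul, Module.End.mul_apply]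
    exact LinearMap.congr_fun (hχ h) _⟩
  map_add' a b := ind_ext H fun x => by
    change χ (M.ρ x (a + b)) = χ (M.ρ x a) + χ (M.ρ x b)
    rw [map_add, map_add]
  map_smul' c a := ind_ext H fun x => by
    change χ (M.ρ x (c • a)) = c • χ (M.ρ x a)
    rw [map_smul, map_smul]

lemma isEquivariant_indLift {M : FDRep k G} {S : FDRep k H} (χ : (M : Type) →ₗ[k] (S : Type))
    (hχ : ∀ h : H, χ ∘ₗ M.ρ h = S.ρ h ∘ₗ χ) :
    IsEquivariant (B := ind H S) ⊤ (indLift χ hχ) :=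
  fun g _ => LinearMap.ext fun m => ind_ext H fun x => by
    change χ (M.ρ x (M.ρ g m)) = χ (M.ρ (x * g) m)
    rw [map_mul, Module.End.mul_apply]

lemma evalOne_comp_indLift {M : FDRep k G} (χ : Module.End k M)
    (hχ : ∀ h : H, χ ∘ₗ M.ρ h = (res H M).ρ h ∘ₗ χ) :
    evalOne H M ∘ₗ indLift (S := res H M) χ hχ = χ :=
  LinearMap.ext fun m => by
    change χ (M.ρ 1 m) = χ m
    rw [map_one, Module.End.one_apply]

lemma relProj_of_relTrace_eq_one {M : FDRep k G} {χ : Module.End k M}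
    (hχ : IsEquivariant H χ) (htr : relTrace H χ = 1) : RelProj M H := by
  have hχ' : ∀ h : H, χ ∘ₗ M.ρ h = (res H M).ρ h ∘ₗ χ := fun h => hχ h h.2
  let j : M ⟶ ind H (res H M) := mkHom (indLift χ hχ') (isEquivariant_indLift (S := res H M) χ hχ')
  refine ⟨res H M, isSummand_of_retraction j (counit H M) (hom_ext ?_)⟩
  change relTrace H (evalOne H M) ∘ₗ indLift χ hχ' = LinearMap.id
  rw [relTrace_comp _ (isEquivariant_indLift (S := res H M) χ hχ'), evalOne_comp_indLift, htr]
  rfl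

lemma exists_relTrace_eq_one_of_relProj {M : FDRep k G} (h : RelProj M H) :
    ∃ ψ : Module.End k M, IsEquivariant H ψ ∧ relTrace H ψ = 1 := by
  obtain ⟨S, Z, ⟨e⟩⟩ := h
  let i : M ⟶ ind H S := biprod.inl ≫ e.inv
  let p : ind H S ⟶ M := e.hom ≫ biprod.fst
  have hip : i ≫ p = 𝟙 M := by simp [i, p]
  refine ⟨homLin p ∘ₗ (extendByZero H S ∘ₗ evalAt H S 1) ∘ₗ homLin i,
    (isEquivariant_homLin H p).comp
      ((isEquivariant_extendByZero_comp_evalAt_one S).comp (isEquivariant_homLin H i)), ?_⟩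
  rw [← comp_relTrace _ (isEquivariant_homLin ⊤ p), ← relTrace_comp _ (isEquivariant_homLin ⊤ i),
    relTrace_extendByZero_comp_evalAt_one, LinearMap.id_comp, ← homLin_comp, hip]
  rfl

lemma exists_relTrace_eq_one_of_counit_split {M : FDRep k G} {s : M ⟶ ind H (res H M)}
    (hs : s ≫ counit H M = 𝟙 M) :
    ∃ φ : Module.End k M, IsEquivariant H φ ∧ relTrace H φ = 1 := by
  refine ⟨evalOne H M ∘ₗ homLin s,
    (isEquivariant_evalOne M).comp (isEquivariant_homLin H s), ?_⟩
  rw [← relTrace_comp _ (isEquivariant_homLin ⊤ s)]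
  exact congrArg homLin hs

end Higman

section Vertex

open Representation MulAction

variable [Fintype G] {M : FDRep k G}

lemma relProj_of_isUnit_relTrace {S : Subgroup G} {χ : Module.End k M} (hχ : IsEquivariant S χ)
    (hu : IsUnit (⟨relTrace S χ, mem_equivariantEnd_iff.2 (relTrace_isEquivariant hχ)⟩ :
      equivariantEnd M ⊤)) : RelProj M S := by
  obtain ⟨w, hw⟩ := hu.exists_left_inv
  have hw' : IsEquivariant ⊤ (w : Module.End k M) := mem_equivariantEnd_iff.1 w.2
  refine relProj_of_relTrace_eq_one ((hw'.mono le_top).comp hχ) ?_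
  rw [← comp_relTrace _ hw']
  exact congrArg Subtype.val hw

lemma Indec.exists_relProj_stabilizer (hM : Indec M) {H Q : Subgroup G} {φ ψ : Module.End k M}
    (hφ : IsEquivariant H φ) (hψ : IsEquivariant Q ψ) (hφtr : relTrace H φ = 1)
    (hψtr : relTrace Q ψ = 1) :
    ∃ x : (G ⧸ H) × (G ⧸ Q), x.2 = QuotientGroup.mk 1 ∧ RelProj M (stabilizer G x) := by
  classical
  let F : (G ⧸ H) × (G ⧸ Q) → Module.End k M :=
    fun x => linHom M.ρ M.ρ x.1.out φ ∘ₗ linHom M.ρ M.ρ x.2.out ψ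
  have hF : ∀ (g : G) x, F (g • x) = linHom M.ρ M.ρ g (F x) := fun g x => by
    simp only [F, Prod.smul_fst, Prod.smul_snd, linHom_out_smul hφ, linHom_out_smul hψ, linHom_comp]
  -- orbit representatives with second coordinate `Q`, so that their stabilizers lie in `Q`
  let rep : orbitRel.Quotient G ((G ⧸ H) × (G ⧸ Q)) → (G ⧸ H) × (G ⧸ Q) :=
    fun ω => ω.out.2.out⁻¹ • ω.out
  have hrep : Function.LeftInverse Quotient.mk'' rep := fun ω =>
    (Quotient.sound (mem_orbit _ _)).trans ω.out_eq'
  let _ : Fintype (orbitRel.Quotient G ((G ⧸ H) × (G ⧸ Q))) := Fintype.ofFinite _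
  have hsum : ∑ ω, relTrace (stabilizer G (rep ω)) (F (rep ω)) = 1 := by
    rw [← sum_eq_sum_relTrace_stabilizer hF hrep, ← relTrace_comp_relTrace, hφtr, hψtr]
    rfl
  have := hM.isLocalRing
  obtain ⟨ω, -, hunit⟩ := IsLocalRing.exists_of_isUnit_sum (s := Finset.univ)
    (f := fun ω => (⟨_, mem_equivariantEnd_iff.2 (relTrace_isEquivariant
      (isEquivariant_stabilizer hF (rep ω)))⟩ : equivariantEnd M ⊤))
    (by convert isUnit_one; exact Subtype.ext (by simpa using hsum))
  exact ⟨rep ω, out_inv_smul _,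
    relProj_of_isUnit_relTrace (isEquivariant_stabilizer hF (rep ω)) hunit⟩

theorem IsVertex.exists_map_conj_le (hM : Indec M) {Q H : Subgroup G} (hvx : IsVertex M Q)
    {φ : Module.End k M} (hφ : IsEquivariant H φ) (htr : relTrace H φ = 1) :
    ∃ g : G, Q.map (MulAut.conj g).toMonoidHom ≤ H := by
  obtain ⟨ψ, hψ, hψtr⟩ := exists_relTrace_eq_one_of_relProj hvx.1
  obtain ⟨x, hx₂, hx⟩ := hM.exists_relProj_stabilizer hφ hψ htr hψtr
  have hle : stabilizer G x ≤ Q := fun g hg => by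
    have hg₂ : g ∈ stabilizer G x.2 := congrArg Prod.snd (mem_stabilizer_iff.1 hg)
    rwa [hx₂, stabilizer_quotient] at hg₂
  have hQ : Q ≤ stabilizer G x.1 := fun q hq =>
    congrArg Prod.fst (mem_stabilizer_iff.1 ((hvx.2 _ hle hx).ge hq))
  rw [← QuotientGroup.out_eq' x.1] at hQ
  exact ⟨_, map_conj_inv_le_of_le_stabilizer hQ⟩

end Vertex

section Restriction

variable [Fintype G]

variable (H : Subgroup G) (M : FDRep k G) in
def resUnit : (Action.res (FGModuleCat k) H.subtype).obj M ⟶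
    (Action.res (FGModuleCat k) H.subtype).obj (ind H (res H M)) :=
  mkHom (extendByZero H (res H M)) fun h _ => LinearMap.ext (extendByZero_ρ h)

lemma resUnit_comp_map_counit (H : Subgroup G) (M : FDRep k G) :
    resUnit H M ≫ (Action.res (FGModuleCat k) H.subtype).map (counit H M) = 𝟙 _ :=
  hom_ext (LinearMap.ext (counit_extendByZero M))

end Restriction

theorem AR_sequence_splits_on_restriction_general {k G : Type} [Field k] [Group G] [Fintype G]
    (M : FDRep k G) (hM : Indec M)
    (Q : Subgroup G) (hvx : IsVertex M Q)
    (H : Subgroup G)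
    (hH : ∀ g : G, ¬ Subgroup.map (MulAut.conj g).toMonoidHom Q ≤ H)
    (h : Heller k G) (E : FDRep k G) (f : h.Ω 2 M ⟶ E) (g : E ⟶ M)
    (hAR : AlmostSplit f g) :
    ∃ s : res H M ⟶ res H E,
      s ≫ (Action.res (FGModuleCat k) H.subtype).map g = 𝟙 (res H M) := by
  have hcounit : ¬ ∃ s : M ⟶ ind H (res H M), s ≫ counit H M = 𝟙 M := by
    rintro ⟨s, hs⟩
    obtain ⟨φ, hφ, htr⟩ := exists_relTrace_eq_one_of_counit_split hs
    obtain ⟨x, hx⟩ := hvx.exists_map_conj_le hM hφ htr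
    exact hH x hx
  obtain ⟨v, hv⟩ := hAR.2.2 _ (counit H M) hcounit
  have hsplit : resUnit H M ≫ (Action.res (FGModuleCat k) H.subtype).map v ≫
      (Action.res (FGModuleCat k) H.subtype).map g = 𝟙 _ := by
    rw [← Functor.map_comp, hv, resUnit_comp_map_counit]
  exact ⟨_, (Category.assoc _ _ _).trans hsplit⟩

/-- If `M` is indecomposable with vertex `Q` and `H ≤ G` contains no
`G`-conjugate of `Q`, then the Auslander–Reiten sequence `0 → Ω²(M) → N → M → 0`
terminating in `M` splits upon restriction to `H`. -/
theorem AR_sequence_splits_on_restriction {k G : Type} [Field k] [Group G] [Fintype G]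
    (p : ℕ) [Fact p.Prime] [CharP k p]
    (M : FDRep k G) (hM : Indec M)
    (Q : Subgroup G) (hQp : IsPGroup p ↥Q) (hvx : IsVertex M Q)
    (H : Subgroup G)
    (hH : ∀ g : G, ¬ Subgroup.map (MulAut.conj g).toMonoidHom Q ≤ H)
    (h : Heller k G) (E : FDRep k G) (f : h.Ω 2 M ⟶ E) (g : E ⟶ M)
    (hAR : AlmostSplit f g) :
    ∃ s : res H M ⟶ res H E,
      s ≫ (Action.res (FGModuleCat k) H.subtype).map g = 𝟙 (res H M) :=
  AR_sequence_splits_on_restriction_general M hM Q hvx H hH h E f g hAR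

end AlgMod
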